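/- arXiv:math/0311238 — 2 statements merged into one kernel-verified Lean document; each statement's English description precedes it below -/
import Mathlib

section
/- Let 0 < a < 1 be real and define Φ(ζ) = (a+ζ)/|a+ζ| for ζ on the unit circle {ζ ∈ ℂ : |ζ| = 1}. Then Φ is a homeomorphism of the unit circle onto itself, and the function f : ℂ \ {0} → ℂ defined by f(z) = Φ⁻¹(z/|z|) is continuous, satisfies f(tz) = f(z) for all z ≠ 0 and all real t > 0, and extends holomorphically from both circles bΔ(a,1) and bΔ(−a,1). -/
/-!
`Φ` is the radial projection from `-a` onto the unit circle, so its inverse sends a direction `w`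
to the point where the ray from `-a` in direction `w` leaves the unit disc; solving
`‖r w - a‖ = 1` for `r > 0` gives an explicit continuous formula. On `bΔ(a,1)` we have
`f z = Ψ (Φ (z - a)) = z - a`. On `bΔ(-a,1)`, with `ζ = z + a`, the disc automorphism
`(ζ - a) / (1 - a ζ)` lies on the unit circle and `a` plus it is a positive multiple of
`ζ - a = z`, so `f z = z / (1 - a (z + a))`, which is holomorphic on the closed disc.
-/

open Complex Metric ComplexConjugate

/-- A function `f` extends holomorphically from the circle `bΔ(a,ρ)`. -/
def ExtHol (f : ℂ → ℂ) (a : ℂ) (ρ : ℝ) : Prop :=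
  ∃ g : ℂ → ℂ, ContinuousOn g (closedBall a ρ) ∧
    DifferentiableOn ℂ g (ball a ρ) ∧ ∀ z ∈ sphere a ρ, g z = f z

lemma norm_div_ofReal_norm {z : ℂ} (hz : z ≠ 0) : ‖z / (‖z‖ : ℂ)‖ = 1 := by
  rw [norm_div, norm_real, norm_norm, div_self (norm_ne_zero_iff.mpr hz)]

lemma ofReal_mul_div_norm {t : ℝ} (ht : 0 < t) (z : ℂ) :
    (t * z) / (‖(t : ℂ) * z‖ : ℂ) = z / (‖z‖ : ℂ) := by
  rw [norm_mul, norm_real, Real.norm_of_nonneg ht.le, ofReal_mul,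
    mul_div_mul_left _ _ (ofReal_ne_zero.mpr ht.ne')]

lemma continuousOn_div_norm : ContinuousOn (fun z : ℂ => z / (‖z‖ : ℂ)) {0}ᶜ :=
  continuousOn_id.div (by fun_prop) fun _ hz => ofReal_ne_zero.mpr (norm_ne_zero_iff.mpr hz)

section

variable {a : ℝ}

lemma ofReal_add_ne_zero (ha : |a| < 1) {ζ : ℂ} (hζ : ‖ζ‖ = 1) : (a : ℂ) + ζ ≠ 0 := by
  intro h
  rw [eq_neg_of_add_eq_zero_right h, norm_neg, norm_real, Real.norm_eq_abs] at hζ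
  linarith

lemma one_sub_ofReal_mul_ne_zero (ha : |a| < 1) {ζ : ℂ} (hζ : ‖ζ‖ ≤ 1) :
    1 - (a : ℂ) * ζ ≠ 0 := by
  intro h
  have : ‖(a : ℂ) * ζ‖ = 1 := by rw [← sub_eq_zero.mp h, norm_one]
  rw [norm_mul, norm_real, Real.norm_eq_abs] at this
  nlinarith [abs_nonneg a, norm_nonneg ζ]

/-- `exitPoint a w` is where the ray from `-a` in the direction `w` leaves the unit disc: for
`‖w‖ = 1`, the condition `‖r * w - a‖ = 1` is the quadratic `r ^ 2 - 2 * a * w.re * r = 1 - a ^ 2`,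
and `exitDist a w` is its positive root. -/
noncomputable def exitDist (a : ℝ) (w : ℂ) : ℝ :=
  a * w.re + √(a ^ 2 * w.re ^ 2 + 1 - a ^ 2)

noncomputable def exitPoint (a : ℝ) (w : ℂ) : ℂ :=
  exitDist a w * w - a

lemma continuous_exitPoint (a : ℝ) : Continuous (exitPoint a) := by
  unfold exitPoint exitDist
  fun_prop

lemma exitDist_pos (ha : |a| < 1) (w : ℂ) : 0 < exitDist a w := by
  have : |a * w.re| < √(a ^ 2 * w.re ^ 2 + 1 - a ^ 2) := by
    rw [← Real.sqrt_sq_eq_abs]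
    exact Real.sqrt_lt_sqrt (sq_nonneg _) (by nlinarith [sq_abs a, abs_nonneg a])
  unfold exitDist
  linarith [neg_abs_le (a * w.re)]

lemma exitDist_quadratic (ha : |a| ≤ 1) (w : ℂ) :
    exitDist a w ^ 2 - 2 * a * w.re * exitDist a w = 1 - a ^ 2 := by
  have : 0 ≤ a ^ 2 * w.re ^ 2 + 1 - a ^ 2 := by
    nlinarith [sq_abs a, abs_nonneg a, sq_nonneg (a * w.re)]
  unfold exitDist
  linear_combination Real.sq_sqrt this

lemma eq_exitDist_of_quadratic (ha : |a| < 1) {w : ℂ} {r : ℝ} (hr : 0 < r)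
    (h : r ^ 2 - 2 * a * w.re * r = 1 - a ^ 2) : r = exitDist a w := by
  have hR := exitDist_pos ha w
  have hq := exitDist_quadratic ha.le w
  -- the other root is `-(1 - a ^ 2) / exitDist a w < 0`
  have : (r - exitDist a w) * (r * exitDist a w + (1 - a ^ 2)) = 0 := by
    linear_combination exitDist a w * h - r * hq
  have h1 : 0 < r * exitDist a w + (1 - a ^ 2) := by
    nlinarith [sq_abs a, abs_nonneg a, mul_pos hr hR]
  linarith [(mul_eq_zero.mp this).resolve_right h1.ne']

lemma norm_ofReal_mul_sub_ofReal_sq {w : ℂ} (hw : ‖w‖ = 1) (r : ℝ) :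
    ‖(r : ℂ) * w - a‖ ^ 2 = r ^ 2 - 2 * a * w.re * r + a ^ 2 := by
  have : w.re ^ 2 + w.im ^ 2 = 1 := by
    have h := Complex.sq_norm w
    rw [hw, normSq_apply] at h
    linarith
  rw [Complex.sq_norm, normSq_apply]
  simp only [sub_re, sub_im, mul_re, mul_im, ofReal_re, ofReal_im]
  linear_combination r ^ 2 * this

lemma norm_exitPoint (ha : |a| ≤ 1) {w : ℂ} (hw : ‖w‖ = 1) : ‖exitPoint a w‖ = 1 := by
  have := norm_ofReal_mul_sub_ofReal_sq (a := a) hw (exitDist a w)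
  rw [exitDist_quadratic ha] at this
  rw [exitPoint]
  nlinarith [norm_nonneg ((exitDist a w : ℂ) * w - a)]

lemma eq_exitPoint (ha : |a| < 1) {ζ w : ℂ} {r : ℝ} (hζ : ‖ζ‖ = 1) (hw : ‖w‖ = 1) (hr : 0 < r)
    (h : (a : ℂ) + ζ = r * w) : ζ = exitPoint a w := by
  have hζ' : ζ = r * w - a := by linear_combination h
  have hq := norm_ofReal_mul_sub_ofReal_sq (a := a) hw r
  rw [← hζ', hζ] at hq
  rw [exitPoint, ← eq_exitDist_of_quadratic ha hr (by linarith), hζ']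

lemma exitPoint_div_norm (ha : |a| < 1) {ζ : ℂ} (hζ : ‖ζ‖ = 1) :
    exitPoint a (((a : ℂ) + ζ) / (‖(a : ℂ) + ζ‖ : ℂ)) = ζ := by
  have hne := ofReal_add_ne_zero ha hζ
  refine (eq_exitPoint ha hζ (norm_div_ofReal_norm hne) (norm_pos_iff.mpr hne) ?_).symm
  rw [mul_div_cancel₀ _ (ofReal_ne_zero.mpr (norm_ne_zero_iff.mpr hne))]

lemma add_exitPoint_div_norm (ha : |a| < 1) {w : ℂ} (hw : ‖w‖ = 1) :
    ((a : ℂ) + exitPoint a w) / (‖(a : ℂ) + exitPoint a w‖ : ℂ) = w := by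
  have hR := exitDist_pos ha w
  have h : (a : ℂ) + exitPoint a w = exitDist a w * w := by rw [exitPoint]; ring
  rw [h, ofReal_mul_div_norm hR, hw, ofReal_one, div_one]

lemma mul_conj_one_sub_ofReal_mul {ζ : ℂ} (hζ : ‖ζ‖ = 1) :
    ζ * conj (1 - (a : ℂ) * ζ) = ζ - a := by
  have hζζ : ζ * conj ζ = 1 := by rw [mul_conj', hζ]; simp
  rw [map_sub, map_one, map_mul, conj_ofReal]
  linear_combination (-(a : ℂ)) * hζζ

lemma norm_sub_ofReal_eq_norm_one_sub_mul {ζ : ℂ} (hζ : ‖ζ‖ = 1) :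
    ‖ζ - a‖ = ‖1 - (a : ℂ) * ζ‖ := by
  rw [← mul_conj_one_sub_ofReal_mul hζ, norm_mul, hζ, one_mul, norm_conj]

lemma ofReal_add_div_one_sub_mul {ζ : ℂ} (hζ : ‖ζ‖ = 1) (hD : 1 - (a : ℂ) * ζ ≠ 0) :
    (a : ℂ) + (ζ - a) / (1 - a * ζ) = ((1 - a ^ 2) / ‖1 - (a : ℂ) * ζ‖ ^ 2 : ℝ) * (ζ - a) := by
  have hD' : conj (1 - (a : ℂ) * ζ) ≠ 0 := (map_ne_zero _).mpr hD
  have h := mul_conj_one_sub_ofReal_mul (a := a) hζ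
  rw [ofReal_div, ofReal_pow, ← mul_conj']
  field_simp
  push_cast
  linear_combination (1 - (a : ℂ) ^ 2) * h

lemma exitPoint_div_norm_sub_ofReal (ha : |a| < 1) {ζ : ℂ} (hζ : ‖ζ‖ = 1) :
    exitPoint a ((ζ - a) / (‖ζ - a‖ : ℂ)) = (ζ - a) / (1 - a * ζ) := by
  have hD := one_sub_ofReal_mul_ne_zero ha hζ.le
  have hz : ζ - a ≠ 0 := by
    rw [← norm_ne_zero_iff, norm_sub_ofReal_eq_norm_one_sub_mul hζ, norm_ne_zero_iff]
    exact hD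
  have hr : 0 < (1 - a ^ 2) / ‖1 - (a : ℂ) * ζ‖ ^ 2 * ‖ζ - a‖ := by
    have : a ^ 2 < 1 := by nlinarith [sq_abs a, abs_nonneg a]
    have := norm_pos_iff.mpr hD
    have := norm_pos_iff.mpr hz
    positivity
  refine (eq_exitPoint ha ?_ (norm_div_ofReal_norm hz) hr ?_).symm
  · rw [norm_div, norm_sub_ofReal_eq_norm_one_sub_mul hζ, div_self (norm_ne_zero_iff.mpr hD)]
  · rw [ofReal_add_div_one_sub_mul hζ hD, ofReal_mul, mul_assoc,
      mul_div_cancel₀ _ (ofReal_ne_zero.mpr (norm_ne_zero_iff.mpr hz))]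

lemma extHol_exitPoint_div_norm (ha : |a| < 1) :
    ExtHol (fun z : ℂ => exitPoint a (z / (‖z‖ : ℂ))) a 1 := by
  refine ⟨fun z => z - a, by fun_prop, by fun_prop, fun z hz => ?_⟩
  rw [mem_sphere_iff_norm] at hz
  simpa using (exitPoint_div_norm ha hz).symm

lemma extHol_exitPoint_div_norm_neg (ha : |a| < 1) :
    ExtHol (fun z : ℂ => exitPoint a (z / (‖z‖ : ℂ))) (-a : ℂ) 1 := by
  have hD : ∀ z ∈ closedBall (-(a : ℂ)) 1, 1 - (a : ℂ) * (z + a) ≠ 0 := fun z hz =>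
    one_sub_ofReal_mul_ne_zero ha (by simpa using mem_closedBall_iff_norm.mp hz)
  have hg : DifferentiableOn ℂ (fun z : ℂ => z / (1 - a * (z + a))) (closedBall (-(a : ℂ)) 1) :=
    differentiableOn_id.div (by fun_prop) hD
  refine ⟨_, hg.continuousOn, hg.mono ball_subset_closedBall, fun z hz => ?_⟩
  have hz' : ‖z + a‖ = 1 := by simpa using mem_sphere_iff_norm.mp hz
  simpa using (exitPoint_div_norm_sub_ofReal ha hz').symm

end

theorem stmt18 (a : ℝ) (ha0 : 0 < a) (ha1 : a < 1) :
    -- Φ(ζ) = (a+ζ)/|a+ζ| is a homeomorphism of the unit circle onto itself: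
    ContinuousOn (fun ζ : ℂ => ((a : ℂ) + ζ) / (‖(a : ℂ) + ζ‖ : ℂ))
      (sphere (0 : ℂ) 1) ∧
    Set.MapsTo (fun ζ : ℂ => ((a : ℂ) + ζ) / (‖(a : ℂ) + ζ‖ : ℂ))
      (sphere (0 : ℂ) 1) (sphere (0 : ℂ) 1) ∧
    ∃ Ψ : ℂ → ℂ,
      -- Ψ is the (continuous) inverse of Φ on the unit circle:
      ContinuousOn Ψ (sphere (0 : ℂ) 1) ∧
      Set.MapsTo Ψ (sphere (0 : ℂ) 1) (sphere (0 : ℂ) 1) ∧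
      (∀ ζ ∈ sphere (0 : ℂ) 1,
        Ψ (((a : ℂ) + ζ) / (‖(a : ℂ) + ζ‖ : ℂ)) = ζ) ∧
      (∀ ζ ∈ sphere (0 : ℂ) 1,
        ((a : ℂ) + Ψ ζ) / (‖(a : ℂ) + Ψ ζ‖ : ℂ) = ζ) ∧
      -- f(z) = Φ⁻¹(z/|z|) is continuous on ℂ \ {0}:
      ContinuousOn (fun z : ℂ => Ψ (z / (‖z‖ : ℂ))) {(0 : ℂ)}ᶜ ∧
      -- f is constant on each ray emanating from the origin:
      (∀ z : ℂ, z ≠ 0 → ∀ t : ℝ, 0 < t →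
        Ψ (((t : ℂ) * z) / (‖(t : ℂ) * z‖ : ℂ))
          = Ψ (z / (‖z‖ : ℂ))) ∧
      -- f extends holomorphically from bΔ(a,1) and bΔ(−a,1):
      ExtHol (fun z : ℂ => Ψ (z / (‖z‖ : ℂ))) (a : ℂ) 1 ∧
      ExtHol (fun z : ℂ => Ψ (z / (‖z‖ : ℂ))) (-(a : ℂ)) 1 := by
  have ha : |a| < 1 := abs_lt.mpr ⟨by linarith, ha1⟩
  have hne : ∀ ζ ∈ sphere (0 : ℂ) 1, (a : ℂ) + ζ ≠ 0 := fun ζ hζ =>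
    ofReal_add_ne_zero ha (mem_sphere_zero_iff_norm.mp hζ)
  refine ⟨continuousOn_div_norm.comp (by fun_prop) hne,
    fun ζ hζ => mem_sphere_zero_iff_norm.mpr (norm_div_ofReal_norm (hne ζ hζ)),
    exitPoint a, (continuous_exitPoint a).continuousOn,
    fun w hw =>
      mem_sphere_zero_iff_norm.mpr (norm_exitPoint ha.le (mem_sphere_zero_iff_norm.mp hw)),
    fun ζ hζ => exitPoint_div_norm ha (mem_sphere_zero_iff_norm.mp hζ),
    fun w hw => add_exitPoint_div_norm ha (mem_sphere_zero_iff_norm.mp hw),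
    (continuous_exitPoint a).comp_continuousOn continuousOn_div_norm,
    fun z _ t ht => by rw [ofReal_mul_div_norm ht],
    extHol_exitPoint_div_norm ha, extHol_exitPoint_div_norm_neg ha⟩
end

section
/- Let 0 < a < 1 be real, let Φ(ζ) = (a+ζ)/|a+ζ| for |ζ| = 1 (a homeomorphism of the unit circle onto itself), and let f : ℂ \ {0} → ℂ be defined by f(z) = Φ⁻¹(z/|z|). If c ∈ ℂ with |c| < 1 and f extends holomorphically from the circle bΔ(c,1), then c = a or c = −a. -/
/-!
Write `φ(v) = v (v + a) / (1 + a v)` and `ψ(w) = w (w - c) / (1 + c̄ (w - c))`, two Blaschke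
products of degree two. On the circle `|w - c| = 1` the boundary value `u = f(w)` satisfies
`(a + u) w̄ = w (a + ū)`, which is exactly `φ(u) = ψ(w)`; by the maximum principle the extension
`g` satisfies `φ ∘ g = ψ` on the whole disc. The map `φ` has a critical point `t ∈ (-1, 0)`, a root
of `a t² + 2 t + a`, with critical value `-t²`, and `φ` takes this value only at `t`. So any solution
`z` of `ψ(z) = -t²` (it lies in the disc, since `t² < 1`) has `g(z) = t`, and the chain rule makes
`z` a critical point of `ψ`: the quadratic `ψ(z) = -t²` has a double root. Its vanishing
discriminant forces `c` real with `c² = a²`.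
-/

open Complex Metric ComplexConjugate

open Filter Topology Set

/-- `v (v + a) / (1 + a v) = w (w - c) / (1 + c̄ (w - c))`, with the denominators cleared. -/
def BlaschkeRel (a : ℝ) (c w v : ℂ) : Prop :=
  v * (v + a) * (1 + conj c * (w - c)) = w * (w - c) * (1 + a * v)

lemma ofReal_norm_mul_div_norm (z : ℂ) : (‖z‖ : ℂ) * (z / ‖z‖) = z := by
  rcases eq_or_ne z 0 with rfl | hz
  · simp
  · field_simp [ofReal_ne_zero.mpr (norm_ne_zero_iff.mpr hz)]

lemma mul_conj_comm_of_div_norm_eq {p z : ℂ} (h : p / ‖p‖ = z / ‖z‖) :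
    p * conj z = z * conj p := by
  set ω := z / ‖z‖
  have hp : p = ‖p‖ * ω := by rw [← h, ofReal_norm_mul_div_norm]
  have hz : z = ‖z‖ * ω := (ofReal_norm_mul_div_norm z).symm
  calc p * conj z = (‖p‖ * ω) * conj (‖z‖ * ω) := by rw [← hp, ← hz]
    _ = (‖z‖ * ω) * conj (‖p‖ * ω) := by simp only [map_mul, conj_ofReal]; ring
    _ = z * conj p := by rw [← hp, ← hz]

lemma mul_conj_eq_one_of_norm_eq_one {z : ℂ} (hz : ‖z‖ = 1) : z * conj z = 1 := by
  rw [mul_conj, normSq_eq_norm_sq, hz]; norm_num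

lemma blaschkeRel_of_mul_conj_comm {a : ℝ} {c z u : ℂ} (hz : ‖z - c‖ = 1) (hu : ‖u‖ = 1)
    (h : (a + u) * conj z = z * conj (a + u)) : BlaschkeRel a c z u := by
  have hzc := mul_conj_eq_one_of_norm_eq_one hz
  have huu := mul_conj_eq_one_of_norm_eq_one hu
  rw [map_sub] at hzc
  rw [map_add, conj_ofReal] at h
  unfold BlaschkeRel
  linear_combination (-(u * (u + a))) * hzc + (u * (z - c)) * h + (z * (z - c)) * huu

lemma blaschkeRel_of_mem_sphere {a : ℝ} {Ψ : ℂ → ℂ}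
    (hΨm : MapsTo Ψ (sphere 0 1) (sphere 0 1))
    (hΨ : ∀ ζ ∈ sphere (0 : ℂ) 1, ((a : ℂ) + Ψ ζ) / (‖(a : ℂ) + Ψ ζ‖ : ℂ) = ζ)
    {c z : ℂ} (hc : ‖c‖ < 1) (hz : z ∈ sphere c 1) :
    BlaschkeRel a c z (Ψ (z / ‖z‖)) := by
  rw [mem_sphere_iff_norm] at hz
  have hz0 : z ≠ 0 := by
    rintro rfl
    rw [zero_sub, norm_neg] at hz
    linarith
  have hζ : z / ‖z‖ ∈ sphere (0 : ℂ) 1 := by simp [hz0]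
  exact blaschkeRel_of_mul_conj_comm hz (by simpa using hΨm hζ)
    (mul_conj_comm_of_div_norm_eq (hΨ _ hζ))

lemma blaschkeRel_on_ball {a : ℝ} {c : ℂ} {g : ℂ → ℂ} (hgc : ContinuousOn g (closedBall c 1))
    (hgd : DifferentiableOn ℂ g (ball c 1))
    (h : ∀ z ∈ sphere c 1, BlaschkeRel a c z (g z)) :
    ∀ w ∈ ball c 1, BlaschkeRel a c w (g w) := by
  refine eqOn_of_eqOn_frontier isBounded_ball (.mk_ball (by fun_prop) (by fun_prop))
    (.mk_ball (by fun_prop) (by fun_prop)) ?_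
  rwa [frontier_ball c one_ne_zero]

lemma norm_sub_lt_one_of_mul_sub_eq {c s z : ℂ} (hc : ‖c‖ < 1) (hs : ‖s‖ < 1)
    (hz : z * (z - c) = s * (1 + conj c * (z - c))) : ‖z - c‖ < 1 := by
  by_contra! h
  have hid : normSq z - normSq (1 + conj c * (z - c)) = (normSq (z - c) - 1) * (1 - normSq c) := by
    apply ofReal_injective
    push_cast
    simp only [← mul_conj, map_add, map_mul, map_sub, map_one, conj_conj]
    ring
  simp only [normSq_eq_norm_sq] at hid
  have hnorm : ‖z‖ * ‖z - c‖ = ‖s‖ * ‖1 + conj c * (z - c)‖ := by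
    simpa only [norm_mul] using congrArg norm hz
  have hA : ‖1 + conj c * (z - c)‖ ≤ ‖z‖ := by
    have : 0 ≤ (‖z - c‖ ^ 2 - 1) * (1 - ‖c‖ ^ 2) :=
      mul_nonneg (by nlinarith) (by nlinarith [norm_nonneg c])
    nlinarith [norm_nonneg z, norm_nonneg (1 + conj c * (z - c))]
  have hz0 : ‖z‖ = 0 := by
    nlinarith [norm_nonneg z, norm_nonneg s, mul_le_mul_of_nonneg_left hA (norm_nonneg s)]
  rw [norm_eq_zero.mp hz0, zero_sub, norm_neg] at h
  linarith

lemma exists_mem_Ioo_quadratic_eq_zero {a : ℝ} (ha0 : 0 < a) (ha1 : a < 1) :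
    ∃ t ∈ Ioo (-1 : ℝ) 0, a * t ^ 2 + 2 * t + a = 0 := by
  have hs := Real.sq_sqrt (by nlinarith : (0 : ℝ) ≤ 1 - a ^ 2)
  have hs1 : √(1 - a ^ 2) < 1 := by
    rw [Real.sqrt_lt' one_pos]; nlinarith
  refine ⟨(√(1 - a ^ 2) - 1) / a, ⟨?_, div_neg_of_neg_of_pos (by linarith) ha0⟩, ?_⟩
  · rw [lt_div_iff₀ ha0]
    nlinarith [Real.sqrt_nonneg (1 - a ^ 2)]
  · field_simp
    linear_combination hs

lemma eq_of_blaschkeRel_of_mul_sub_eq {a t : ℝ} (hta : a * t ^ 2 + 2 * t + a = 0) {c z v : ℂ}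
    (hA : 1 + conj c * (z - c) ≠ 0) (hz : z * (z - c) = -t ^ 2 * (1 + conj c * (z - c)))
    (hv : BlaschkeRel a c z v) : v = t := by
  have hta' : (a : ℂ) * t ^ 2 + 2 * t + a = 0 := by exact_mod_cast hta
  have hsq : (1 + conj c * (z - c)) * (v - t) ^ 2 = 0 := by
    unfold BlaschkeRel at hv
    linear_combination hv + (1 + a * v) * hz - (1 + conj c * (z - c)) * v * hta'
  simpa [hA, sub_eq_zero] using hsq

lemma eq_critical_point_of_eventually_blaschkeRel {a t : ℝ} (hta : a * t ^ 2 + 2 * t + a = 0)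
    (hat : 1 + a * t ≠ 0) {c z : ℂ} {g : ℂ → ℂ} (hg : DifferentiableAt ℂ g z)
    (hrel : ∀ᶠ w in 𝓝 z, BlaschkeRel a c w (g w)) (hgz : g z = t)
    (hz : z * (z - c) = -t ^ 2 * (1 + conj c * (z - c))) :
    z = (c - t ^ 2 * conj c) / 2 := by
  have hta' : (a : ℂ) * t ^ 2 + 2 * t + a = 0 := by exact_mod_cast hta
  have hat' : (1 + a * t : ℂ) ≠ 0 := by exact_mod_cast hat
  set G := deriv g z
  have hG : HasDerivAt g G z := hg.hasDerivAt
  have hF := ((hG.mul (hG.add_const (a : ℂ))).mul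
    ((((hasDerivAt_id z).sub_const c).const_mul (conj c)).const_add 1)).sub
    (((hasDerivAt_id z).mul ((hasDerivAt_id z).sub_const c)).mul
      ((hG.const_mul (a : ℂ)).const_add 1))
  have hF0 : HasDerivAt (fun w => g w * (g w + a) * (1 + conj c * (id w - c))
      - id w * (id w - c) * (1 + a * g w)) 0 z :=
    (hasDerivAt_const z 0).congr_of_eventuallyEq (hrel.mono fun w hw => sub_eq_zero.mpr hw)
  have h := hF.unique hF0
  simp only [id, Pi.mul_apply, hgz] at h
  -- `a t² + 2 t + a = 0` says `φ'(t) = 0`: the terms carrying `g'(z)` cancel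
  have : (1 + a * t : ℂ) * (2 * z - (c - t ^ 2 * conj c)) = 0 := by
    linear_combination -h + (G * (1 + conj c * (z - c)) + t * conj c) * hta' - a * G * hz
  linear_combination (mul_eq_zero.mp this).resolve_left hat' / 2

lemma eq_critical_point_of_blaschkeRel {a t : ℝ} (ht : t ^ 2 < 1)
    (hta : a * t ^ 2 + 2 * t + a = 0) {c : ℂ} (hc : ‖c‖ < 1) {g : ℂ → ℂ}
    (hgd : DifferentiableOn ℂ g (ball c 1)) (hrel : ∀ w ∈ ball c 1, BlaschkeRel a c w (g w))
    {z : ℂ} (hz : z * (z - c) = -t ^ 2 * (1 + conj c * (z - c))) :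
    z = (c - t ^ 2 * conj c) / 2 := by
  have hzc : ‖z - c‖ < 1 :=
    norm_sub_lt_one_of_mul_sub_eq hc (by simpa only [norm_neg, norm_pow, norm_real,
      Real.norm_eq_abs, sq_abs] using ht) hz
  have hzmem : z ∈ ball c 1 := mem_ball_iff_norm.mpr hzc
  have hA : 1 + conj c * (z - c) ≠ 0 := by
    have : ‖conj c * (z - c)‖ < 1 := by
      rw [norm_mul, RCLike.norm_conj]
      nlinarith [norm_nonneg c, norm_nonneg (z - c)]
    intro h
    rw [eq_neg_of_add_eq_zero_right h, norm_neg, norm_one] at this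
    exact this.false
  have hat : 1 + a * t ≠ 0 := by
    have h : (1 + a * t) * (1 + t ^ 2) = 1 - t ^ 2 := by linear_combination t * hta
    intro h0
    rw [h0, zero_mul] at h
    linarith
  have hnhds : ball c 1 ∈ 𝓝 z := isOpen_ball.mem_nhds hzmem
  exact eq_critical_point_of_eventually_blaschkeRel hta hat (hgd.differentiableAt hnhds)
    (eventually_of_mem hnhds hrel) (eq_of_blaschkeRel_of_mul_sub_eq hta hA hz (hrel z hzmem)) hz

lemma sq_eq_of_blaschkeRel {a t : ℝ} (ht : t ^ 2 < 1)
    (hta : a * t ^ 2 + 2 * t + a = 0) {c : ℂ} (hc : ‖c‖ < 1) {g : ℂ → ℂ}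
    (hgd : DifferentiableOn ℂ g (ball c 1)) (hrel : ∀ w ∈ ball c 1, BlaschkeRel a c w (g w)) :
    (c - t ^ 2 * conj c) ^ 2 = 4 * t ^ 2 * (1 - conj c * c) := by
  obtain ⟨s, hs⟩ := IsAlgClosed.exists_pow_nat_eq
    ((c - t ^ 2 * conj c) ^ 2 - 4 * t ^ 2 * (1 - conj c * c)) two_pos
  have hroot := eq_critical_point_of_blaschkeRel ht hta hc hgd hrel
    (z := (c - t ^ 2 * conj c + s) / 2) (by linear_combination hs / 4)
  have hs0 : s = 0 := by linear_combination 2 * hroot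
  linear_combination -hs + s * hs0

lemma eq_or_eq_neg_of_sq_eq {a t : ℝ} (ht0 : t ≠ 0) (ht1 : t ^ 2 ≠ 1)
    (hta : a * t ^ 2 + 2 * t + a = 0) {c : ℂ}
    (h : (c - t ^ 2 * conj c) ^ 2 = 4 * t ^ 2 * (1 - conj c * c)) : c = a ∨ c = -a := by
  have hre := congrArg re h
  have him := congrArg im h
  simp only [pow_two, mul_re, mul_im, sub_re, sub_im, conj_re, conj_im, ofReal_re, ofReal_im,
    re_ofNat, im_ofNat, one_re, one_im] at hre him
  have hprod : c.re * c.im * ((1 - t ^ 2) * (1 + t ^ 2)) = 0 := by linear_combination him / 2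
  have ht : (1 - t ^ 2) * (1 + t ^ 2) ≠ 0 :=
    mul_ne_zero (sub_ne_zero.mpr ht1.symm) (by positivity)
  rcases mul_eq_zero.mp ((mul_eq_zero.mp hprod).resolve_right ht) with hx | hy
  · exfalso
    rw [hx] at hre
    nlinarith [sq_nonneg (c.im * (1 - t ^ 2)), pow_pos (abs_pos.mpr ht0) 2, sq_abs t]
  · rw [hy] at hre
    have : (c.re - a) * (c.re + a) * (1 + t ^ 2) ^ 2 = 0 := by
      linear_combination hre - (a * (1 + t ^ 2) - 2 * t) * hta
    rcases mul_eq_zero.mp ((mul_eq_zero.mp this).resolve_right (by positivity)) with h' | h'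
    · left; apply Complex.ext <;> simp [hy]; linarith
    · right; apply Complex.ext <;> simp [hy]; linarith

theorem stmt19_general (a : ℝ) (ha0 : 0 < a) (ha1 : a < 1)
    -- Ψ is the inverse of the homeomorphism Φ(ζ) = (a+ζ)/|a+ζ| of the unit circle:
    (Ψ : ℂ → ℂ)
    (hΨm : Set.MapsTo Ψ (sphere (0 : ℂ) 1) (sphere (0 : ℂ) 1))
    (hΨ2 : ∀ ζ ∈ sphere (0 : ℂ) 1,
      ((a : ℂ) + Ψ ζ) / (‖(a : ℂ) + Ψ ζ‖ : ℂ) = ζ)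
    -- f(z) = Φ⁻¹(z/|z|) extends holomorphically from bΔ(c,1) with |c| < 1:
    (c : ℂ) (hc : ‖c‖ < 1)
    (hext : ExtHol (fun z : ℂ => Ψ (z / (‖z‖ : ℂ))) c 1) :
    c = (a : ℂ) ∨ c = -(a : ℂ) := by
  obtain ⟨g, hgc, hgd, hgf⟩ := hext
  obtain ⟨t, ⟨ht1, ht0⟩, hta⟩ := exists_mem_Ioo_quadratic_eq_zero ha0 ha1
  have ht : t ^ 2 < 1 := by nlinarith
  have hrel : ∀ w ∈ ball c 1, BlaschkeRel a c w (g w) :=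
    blaschkeRel_on_ball hgc hgd fun z hz => hgf z hz ▸ blaschkeRel_of_mem_sphere hΨm hΨ2 hc hz
  exact eq_or_eq_neg_of_sq_eq ht0.ne ht.ne hta (sq_eq_of_blaschkeRel ht hta hc hgd hrel)

theorem stmt19 (a : ℝ) (ha0 : 0 < a) (ha1 : a < 1)
    -- Ψ is the inverse of the homeomorphism Φ(ζ) = (a+ζ)/|a+ζ| of the unit circle:
    (Ψ : ℂ → ℂ)
    (hΨc : ContinuousOn Ψ (sphere (0 : ℂ) 1))
    (hΨm : Set.MapsTo Ψ (sphere (0 : ℂ) 1) (sphere (0 : ℂ) 1))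
    (hΨ1 : ∀ ζ ∈ sphere (0 : ℂ) 1,
      Ψ (((a : ℂ) + ζ) / (‖(a : ℂ) + ζ‖ : ℂ)) = ζ)
    (hΨ2 : ∀ ζ ∈ sphere (0 : ℂ) 1,
      ((a : ℂ) + Ψ ζ) / (‖(a : ℂ) + Ψ ζ‖ : ℂ) = ζ)
    -- f(z) = Φ⁻¹(z/|z|) extends holomorphically from bΔ(c,1) with |c| < 1:
    (c : ℂ) (hc : ‖c‖ < 1)
    (hext : ExtHol (fun z : ℂ => Ψ (z / (‖z‖ : ℂ))) c 1) :
    c = (a : ℂ) ∨ c = -(a : ℂ) :=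
  stmt19_general a ha0 ha1 Ψ hΨm hΨ2 c hc hext
end
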